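/- arXiv:1909.11040 — 2 statements merged into one kernel-verified Lean document; each statement's English description precedes it below -/
import Mathlib

section
/- Let σ : [0,∞) → {1,2,3,4} be any measurable switching signal and let X : [0,∞) → ℝ² be continuous with X(t) = X(0) + ∫₀ᵗ G(σ(τ), X(τ)) dτ for all t ≥ 0. If X(0) ∈ [0,∞)², then X(t) ∈ [0,∞)² for all t ≥ 0; that is, the nonnegative orthant is positively invariant for the switched dynamics. -/
open Real Set MeasureTheory Filter

/-- Inflow function `μ_k(s, x)` for modes `s ∈ {1,2,3,4}` (indexed `0..3`) and links
`k ∈ {1,2}` (indexed `0..1`). -/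
noncomputable def mu (β η : ℝ) (s : Fin 4) (k : Fin 2) (x : ℝ × ℝ) : ℝ :=
  match s.val, k.val with
  | 0, 0 => η * Real.exp (-β * x.1) / (Real.exp (-β * x.1) + Real.exp (-β * x.2))
  | 0, _ => η * Real.exp (-β * x.2) / (Real.exp (-β * x.1) + Real.exp (-β * x.2))
  | 1, 0 => η / (1 + Real.exp (-β * x.2))
  | 1, _ => η * Real.exp (-β * x.2) / (1 + Real.exp (-β * x.2))
  | 2, 0 => η * Real.exp (-β * x.1) / (Real.exp (-β * x.1) + 1)
  | 2, _ => η / (Real.exp (-β * x.1) + 1)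
  | _, _ => η / 2

/-- Outflow (sending) function `f_k(y) = F_k (1 - e^{-y})` of link `k`. -/
noncomputable def fOut (F : Fin 2 → ℝ) (k : Fin 2) (y : ℝ) : ℝ :=
  F k * (1 - Real.exp (-y))

/-- The mode-`s` vector field `G(s,x) = (μ₁(s,x) − f₁(x₁), μ₂(s,x) − f₂(x₂))`. -/
noncomputable def Gvec (β η : ℝ) (F : Fin 2 → ℝ) (s : Fin 4) (x : ℝ × ℝ) : ℝ × ℝ :=
  (mu β η s 0 x - fOut F 0 x.1, mu β η s 1 x - fOut F 1 x.2)

/-- The `k`-th coordinate of `x ∈ ℝ²`. -/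
def coord (x : ℝ × ℝ) (k : Fin 2) : ℝ := if k = 0 then x.1 else x.2

/-!
Each component of `G` is a nonnegative inflow `μₖ` minus the outflow `fₖ(xₖ)`, and `fₖ(y) ≤ 0`
for `y ≤ 0`; so the `k`-th component of the vector field is nonnegative wherever `xₖ ≤ 0`.
If a coordinate of the trajectory were negative at time `t`, let `T` be the last time in `[0, t]`
at which it is nonnegative: on `(T, t]` the integrand of that coordinate is nonnegative, hence
`xₖ(t) ≥ xₖ(T) ≥ 0`. Since the switching signal is only measurable, the integrand is written as a
finite sum of indicators of continuous fields, which are bounded along the compact trajectory.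
-/

theorem MeasureTheory.AEStronglyMeasurable.comp_switched {α ι E F : Type*} [MeasurableSpace α]
    {μ : Measure α} [Fintype ι] [MeasurableSpace ι] [MeasurableSingletonClass ι]
    [TopologicalSpace E] [TopologicalSpace F] [AddCommMonoid F] [ContinuousAdd F] {G : ι → E → F}
    (hG : ∀ s, Continuous (G s)) {σ : α → ι} (hσ : Measurable σ) {X : α → E}
    (hX : AEStronglyMeasurable X μ) :
    AEStronglyMeasurable (fun a => G (σ a) (X a)) μ := by
  have hsum : (fun a => G (σ a) (X a)) =
      fun a => ∑ s, (σ ⁻¹' {s}).indicator (fun a => G s (X a)) a := by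
    funext a
    rw [Finset.sum_eq_single_of_mem (σ a) (Finset.mem_univ _)]
    · simp
    · intro s _ hs
      exact indicator_of_notMem (by simpa using Ne.symm hs) _
  rw [hsum]
  exact Finset.aestronglyMeasurable_fun_sum _ fun s _ =>
    ((hG s).comp_aestronglyMeasurable hX).indicator (hσ (measurableSet_singleton s))

theorem intervalIntegrable_comp_switched {ι E F : Type*} [Fintype ι] [MeasurableSpace ι]
    [MeasurableSingletonClass ι] [TopologicalSpace E] [TopologicalSpace.PseudoMetrizableSpace E]
    [NormedAddCommGroup F] {G : ι → E → F} (hG : ∀ s, Continuous (G s)) {σ : ℝ → ι}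
    (hσ : Measurable σ) {X : ℝ → E} {a b : ℝ} (hX : ContinuousOn X (uIcc a b)) :
    IntervalIntegrable (fun τ => G (σ τ) (X τ)) volume a b := by
  have hK : IsCompact (⋃ s, G s '' (X '' uIcc a b)) :=
    isCompact_iUnion fun s => (isCompact_uIcc.image_of_continuousOn hX).image (hG s)
  obtain ⟨C, hC⟩ := hK.isBounded.exists_norm_le
  have : IsFiniteMeasure (volume.restrict (uIcc a b)) :=
    isFiniteMeasure_restrict.2 measure_Icc_lt_top.ne
  refine IntegrableOn.intervalIntegrable (Integrable.of_bound
    ((hX.aestronglyMeasurable measurableSet_uIcc).comp_switched hG hσ) C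
    (ae_restrict_of_forall_mem measurableSet_uIcc fun τ hτ => hC _ ?_))
  exact mem_iUnion.2 ⟨σ τ, mem_image_of_mem _ (mem_image_of_mem X hτ)⟩

theorem nonneg_of_eq_add_integral {x g : ℝ → ℝ} {a t : ℝ} (hat : a ≤ t)
    (hx : ContinuousOn x (Icc a t)) (hg : IntervalIntegrable g volume a t)
    (heq : ∀ s ∈ Icc a t, x s = x a + ∫ τ in a..s, g τ)
    (hg_nonneg : ∀ τ ∈ Icc a t, x τ < 0 → 0 ≤ g τ) (ha : 0 ≤ x a) : 0 ≤ x t := by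
  set S := Icc a t ∩ x ⁻¹' Ici 0
  have hS : IsCompact S := isCompact_Icc.of_isClosed_subset
    (hx.preimage_isClosed_of_isClosed isClosed_Icc isClosed_Ici) inter_subset_left
  obtain ⟨⟨haT, hTt⟩, hT : 0 ≤ x (sSup S)⟩ : sSup S ∈ S :=
    hS.sSup_mem ⟨a, left_mem_Icc.2 hat, ha⟩
  set T := sSup S
  have hneg : ∀ τ ∈ Ioc T t, x τ < 0 := fun τ hτ => by
    by_contra! h
    exact hτ.1.not_ge (le_csSup hS.bddAbove ⟨⟨haT.trans hτ.1.le, hτ.2⟩, h⟩)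
  have hgT : IntervalIntegrable g volume a T :=
    hg.mono_set (by rw [uIcc_of_le haT, uIcc_of_le hat]; exact Icc_subset_Icc_right hTt)
  have hstep : x t = x T + ∫ τ in T..t, g τ := by
    rw [heq t (right_mem_Icc.2 hat), heq T ⟨haT, hTt⟩,
      ← intervalIntegral.integral_interval_sub_left hg hgT]
    ring
  have hint : 0 ≤ ∫ τ in T..t, g τ := by
    rw [intervalIntegral.integral_of_le hTt]
    refine setIntegral_nonneg measurableSet_Ioc fun τ hτ => hg_nonneg τ ?_ (hneg τ hτ)
    exact ⟨haT.trans hτ.1.le, hτ.2⟩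
  linarith

theorem ContinuousLinearMap.nonneg_apply_of_eq_add_integral {E : Type*} [NormedAddCommGroup E]
    [NormedSpace ℝ E] [CompleteSpace E] (L : E →L[ℝ] ℝ) {X g : ℝ → E} {a t : ℝ} (hat : a ≤ t)
    (hX : ContinuousOn X (Icc a t)) (hg : IntervalIntegrable g volume a t)
    (heq : ∀ s ∈ Icc a t, X s = X a + ∫ τ in a..s, g τ)
    (hg_nonneg : ∀ τ ∈ Icc a t, L (X τ) < 0 → 0 ≤ L (g τ)) (ha : 0 ≤ L (X a)) :
    0 ≤ L (X t) := by
  refine nonneg_of_eq_add_integral hat (L.continuous.comp_continuousOn hX)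
    ⟨L.integrable_comp hg.1, L.integrable_comp hg.2⟩ (fun s hs => ?_) hg_nonneg ha
  have hgs : IntervalIntegrable g volume a s :=
    hg.mono_set (by rw [uIcc_of_le hs.1, uIcc_of_le hat]; exact Icc_subset_Icc_right hs.2)
  rw [Function.comp_apply, Function.comp_apply, heq s hs, map_add,
    L.intervalIntegral_comp_comm hgs]

section Model

variable {β η : ℝ} {F : Fin 2 → ℝ}

theorem mu_nonneg (hη : 0 ≤ η) (s : Fin 4) (k : Fin 2) (x : ℝ × ℝ) : 0 ≤ mu β η s k x := by
  fin_cases s <;> fin_cases k <;> simp only [mu] <;> positivity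

theorem fOut_nonpos {k : Fin 2} {y : ℝ} (hF : 0 ≤ F k) (hy : y ≤ 0) : fOut F k y ≤ 0 :=
  mul_nonpos_of_nonneg_of_nonpos hF (sub_nonpos.2 (Real.one_le_exp (neg_nonneg.2 hy)))

theorem Gvec_fst_nonneg (hη : 0 ≤ η) (hF : 0 ≤ F 0) (s : Fin 4) {x : ℝ × ℝ} (hx : x.1 ≤ 0) :
    0 ≤ (Gvec β η F s x).1 :=
  sub_nonneg.2 ((fOut_nonpos hF hx).trans (mu_nonneg hη s 0 x))

theorem Gvec_snd_nonneg (hη : 0 ≤ η) (hF : 0 ≤ F 1) (s : Fin 4) {x : ℝ × ℝ} (hx : x.2 ≤ 0) :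
    0 ≤ (Gvec β η F s x).2 :=
  sub_nonneg.2 ((fOut_nonpos hF hx).trans (mu_nonneg hη s 1 x))

theorem mu_continuous (s : Fin 4) (k : Fin 2) : Continuous (mu β η s k) := by
  fin_cases s <;> fin_cases k <;> dsimp only [mu] <;>
    exact Continuous.div (by fun_prop) (by fun_prop) (fun x => by positivity)

theorem Gvec_continuous (s : Fin 4) : Continuous (Gvec β η F s) := by
  unfold Gvec fOut
  have := mu_continuous (β := β) (η := η) s
  fun_prop

end Model

theorem stmt5_general (β η : ℝ) (F : Fin 2 → ℝ) (hη : 0 < η)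
    (hF : ∀ k, 0 < F k)
    (σ : ℝ → Fin 4) (hσ : Measurable σ)
    (X : ℝ → ℝ × ℝ) (hXcont : ContinuousOn X (Set.Ici (0 : ℝ)))
    (hXeq : ∀ t : ℝ, 0 ≤ t → X t = X 0 + ∫ τ in (0 : ℝ)..t, Gvec β η F (σ τ) (X τ))
    (hX0 : X 0 ∈ Set.Ici (0 : ℝ) ×ˢ Set.Ici (0 : ℝ)) :
    ∀ t : ℝ, 0 ≤ t → X t ∈ Set.Ici (0 : ℝ) ×ˢ Set.Ici (0 : ℝ) := by
  intro t ht
  have hX : ContinuousOn X (Icc 0 t) := hXcont.mono Icc_subset_Ici_self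
  have hG : IntervalIntegrable (fun τ => Gvec β η F (σ τ) (X τ)) volume 0 t :=
    intervalIntegrable_comp_switched Gvec_continuous hσ (by rwa [uIcc_of_le ht])
  have heq : ∀ s ∈ Icc 0 t, X s = X 0 + ∫ τ in (0 : ℝ)..s, Gvec β η F (σ τ) (X τ) :=
    fun s hs => hXeq s hs.1
  exact ⟨(ContinuousLinearMap.fst ℝ ℝ ℝ).nonneg_apply_of_eq_add_integral ht hX hG heq
      (fun τ _ hτ => Gvec_fst_nonneg hη.le (hF 0).le _ hτ.le) hX0.1,
    (ContinuousLinearMap.snd ℝ ℝ ℝ).nonneg_apply_of_eq_add_integral ht hX hG heq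
      (fun τ _ hτ => Gvec_snd_nonneg hη.le (hF 1).le _ hτ.le) hX0.2⟩

/-- the nonnegative orthant `[0,∞)²` is positively invariant for the switched
dynamics `Ẋ = G(σ(t), X(t))` (in integral form). -/
theorem stmt5 (β η : ℝ) (F : Fin 2 → ℝ) (hβ : 0 < β) (hη : 0 < η)
    (hF : ∀ k, 0 < F k)
    (σ : ℝ → Fin 4) (hσ : Measurable σ)
    (X : ℝ → ℝ × ℝ) (hXcont : ContinuousOn X (Set.Ici (0 : ℝ)))
    (hXeq : ∀ t : ℝ, 0 ≤ t → X t = X 0 + ∫ τ in (0 : ℝ)..t, Gvec β η F (σ τ) (X τ))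
    (hX0 : X 0 ∈ Set.Ici (0 : ℝ) ×ˢ Set.Ici (0 : ℝ)) :
    ∀ t : ℝ, 0 ≤ t → X t ∈ Set.Ici (0 : ℝ) ×ˢ Set.Ici (0 : ℝ) :=
  stmt5_general β η F hη hF σ hσ X hXcont hXeq hX0
end

section
/- Let σ : [0,∞) → {1,2,3,4} be a measurable switching signal such that for each s ∈ {1,2,3,4} the occupation fraction converges: (1/t)·Leb{τ ∈ [0,t] : σ(τ) = s} → p_s as t → ∞. Let X : [0,∞) → ℝ² be continuous with X(t) = X(0) + ∫₀ᵗ G(σ(τ), X(τ)) dτ for all t ≥ 0, X(t) ∈ M := [x̄₁,∞)×[x̄₂,∞) for all t ≥ 0, and X(t)/t → 0 componentwise as t → ∞. Then η·(p₂/(1+exp(−β·x̄₂)) + p₄/2) ≤ F₁ and η·(p₃/(1+exp(−β·x̄₁)) + p₄/2) ≤ F₂. -/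
/-!
Along a trajectory in `M` the first component of `G(σ, X)` is bounded below by `w(σ) − F₁`
with `w = (0, η/(1+e^{−β x̄₂}), 0, η/2)`: the outflow never exceeds `F₁`, and since `X₂ ≥ x̄₂`
each mode's inflow into link 1 is at least `w`. Integrating,
`X₁(t) − X₁(0) ≥ ∑ₛ w(s) Leb{τ ∈ [0,t] : σ τ = s} − F₁ t`; dividing by `t`, sublinearity of `X`
kills the left side while the occupation fractions turn the right side into `∑ₛ w(s) pₛ − F₁`.
Link 2 is symmetric.
-/

open Real Set MeasureTheory Filter

open Topology

section Occupation

variable {ι : Type*} [Fintype ι] [MeasurableSpace ι] [MeasurableSingletonClass ι]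

theorem integrable_switched {α E : Type*} [MeasurableSpace α] [NormedAddCommGroup E]
    {μ : Measure α} {σ : α → ι} (hσ : Measurable σ) {h : ι → α → E}
    (hh : ∀ s, Integrable (h s) μ) : Integrable (fun a => h (σ a) a) μ := by
  classical
  have hsum : (fun a => h (σ a) a) = ∑ s, (σ ⁻¹' {s}).indicator (h s) := by
    ext a
    rw [Finset.sum_apply, Finset.sum_eq_single (σ a) (fun s _ hs => ?_) (by simp)]
    · simp
    · simp [Set.indicator, Ne.symm hs]
  rw [hsum]
  exact integrable_finsetSum' _ fun s _ => (hh s).indicator (hσ (measurableSet_singleton s))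

noncomputable def occupationTime (σ : ℝ → ι) (s : ι) (t : ℝ) : ℝ :=
  (volume {τ : ℝ | τ ∈ Icc 0 t ∧ σ τ = s}).toReal

theorem integral_comp_eq_sum_occupationTime {σ : ℝ → ι} (hσ : Measurable σ) (w : ι → ℝ)
    {t : ℝ} (ht : 0 ≤ t) : ∫ τ in 0..t, w (σ τ) = ∑ s, w s * occupationTime σ s t := by
  rw [intervalIntegral.integral_of_le ht, ← integral_Icc_eq_integral_Ioc,
    ← integral_map hσ.aemeasurable (Measurable.of_discrete).aestronglyMeasurable,
    integral_fintype Integrable.of_finite]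
  refine Finset.sum_congr rfl fun s _ => ?_
  rw [map_measureReal_apply hσ (measurableSet_singleton s),
    measureReal_restrict_apply (hσ (measurableSet_singleton s)), smul_eq_mul, mul_comm,
    Set.inter_comm]
  rfl

theorem sum_mul_occupationTime_sub_le {σ : ℝ → ι} (hσ : Measurable σ) {w : ι → ℝ} {c : ℝ}
    {g : ℝ → ℝ} {t : ℝ} (ht : 0 ≤ t) (hg : IntervalIntegrable g volume 0 t)
    (hlow : ∀ τ ∈ Icc 0 t, w (σ τ) - c ≤ g τ) :
    ∑ s, w s * occupationTime σ s t - c * t ≤ ∫ τ in 0..t, g τ := by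
  have hw : IntervalIntegrable (fun τ => w (σ τ)) volume 0 t :=
    (intervalIntegrable_iff_integrableOn_Ioc_of_le ht).2
      (integrable_switched hσ fun s => integrable_const (w s))
  calc ∑ s, w s * occupationTime σ s t - c * t = ∫ τ in 0..t, (w (σ τ) - c) := by
        rw [intervalIntegral.integral_sub hw intervalIntegrable_const,
          integral_comp_eq_sum_occupationTime hσ w ht, intervalIntegral.integral_const,
          smul_eq_mul, sub_zero, mul_comm c]
    _ ≤ ∫ τ in 0..t, g τ :=
        intervalIntegral.integral_mono_on ht (hw.sub intervalIntegrable_const) hg hlow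

theorem sum_mul_le_of_sublinear {σ : ℝ → ι} (hσ : Measurable σ) {p : ι → ℝ}
    (hfrac : ∀ s, Tendsto (fun t => occupationTime σ s t / t) atTop (𝓝 (p s)))
    {w : ι → ℝ} {c : ℝ} {Y g : ℝ → ℝ} (hg : ∀ t, 0 ≤ t → IntervalIntegrable g volume 0 t)
    (hY : ∀ t, 0 ≤ t → Y t = Y 0 + ∫ τ in 0..t, g τ)
    (hlow : ∀ τ, 0 ≤ τ → w (σ τ) - c ≤ g τ)
    (hYsub : Tendsto (fun t => Y t / t) atTop (𝓝 0)) : ∑ s, w s * p s ≤ c := by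
  have hbound : ∀ᶠ t in atTop, ∑ s, w s * (occupationTime σ s t / t) - c ≤ Y t / t - Y 0 / t := by
    filter_upwards [eventually_gt_atTop 0] with t ht
    have := sum_mul_occupationTime_sub_le hσ ht.le (hg t ht.le) fun τ hτ => hlow τ hτ.1
    rw [← sub_eq_of_eq_add' (hY t ht.le)] at this
    simp only [mul_div_assoc', ← Finset.sum_div]
    rw [div_sub' ht.ne', div_sub_div_same]
    exact div_le_div_of_nonneg_right (by linarith) ht.le
  have hlim := le_of_tendsto_of_tendsto
    ((tendsto_finsetSum _ fun s _ => (hfrac s).const_mul (w s)).sub_const c)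
    (hYsub.sub (tendsto_const_nhds.div_atTop tendsto_id)) hbound
  linarith

end Occupation

theorem continuous_Gvec (β η : ℝ) (F : Fin 2 → ℝ) (s : Fin 4) : Continuous (Gvec β η F s) := by
  have hmu : ∀ k, Continuous fun x => mu β η s k x := fun k => by
    fin_cases s <;> fin_cases k <;> simp only [mu] <;>
      fun_prop (disch := intro x; positivity)
  unfold Gvec fOut
  fun_prop

theorem fOut_le {F : Fin 2 → ℝ} {k : Fin 2} (hF : 0 ≤ F k) (y : ℝ) : fOut F k y ≤ F k := by
  unfold fOut
  nlinarith [exp_pos (-y)]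

theorem div_one_add_exp_le {β η c y : ℝ} (hβ : 0 ≤ β) (hη : 0 ≤ η) (hcy : c ≤ y) :
    η / (1 + exp (-β * c)) ≤ η / (1 + exp (-β * y)) := by
  have : exp (-β * y) ≤ exp (-β * c) := exp_le_exp.2 (by nlinarith)
  exact div_le_div_of_nonneg_left hη (by positivity) (by linarith)

theorem mu_fst_ge {β η c : ℝ} (hβ : 0 ≤ β) (hη : 0 ≤ η) {x : ℝ × ℝ} (hx : c ≤ x.2) (s : Fin 4) :
    ![0, η / (1 + exp (-β * c)), 0, η / 2] s ≤ mu β η s 0 x := by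
  fin_cases s
  · show 0 ≤ η * exp (-β * x.1) / (exp (-β * x.1) + exp (-β * x.2))
    positivity
  · exact div_one_add_exp_le hβ hη hx
  · show 0 ≤ η * exp (-β * x.1) / (exp (-β * x.1) + 1)
    positivity
  · exact le_rfl

theorem mu_snd_ge {β η c : ℝ} (hβ : 0 ≤ β) (hη : 0 ≤ η) {x : ℝ × ℝ} (hx : c ≤ x.1) (s : Fin 4) :
    ![0, 0, η / (1 + exp (-β * c)), η / 2] s ≤ mu β η s 1 x := by
  fin_cases s
  · show 0 ≤ η * exp (-β * x.2) / (exp (-β * x.1) + exp (-β * x.2))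
    positivity
  · show 0 ≤ η * exp (-β * x.2) / (1 + exp (-β * x.2))
    positivity
  · show η / (1 + exp (-β * c)) ≤ η / (exp (-β * x.1) + 1)
    rw [add_comm _ 1]
    exact div_one_add_exp_le hβ hη hx
  · exact le_rfl

theorem intervalIntegrable_Gvec_switched {β η : ℝ} {F : Fin 2 → ℝ} {σ : ℝ → Fin 4}
    (hσ : Measurable σ) {X : ℝ → ℝ × ℝ} (hX : ContinuousOn X (Ici 0)) {t : ℝ} (ht : 0 ≤ t) :
    IntervalIntegrable (fun τ => Gvec β η F (σ τ) (X τ)) volume 0 t :=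
  (intervalIntegrable_iff_integrableOn_Ioc_of_le ht).2 <| integrable_switched hσ fun s =>
    (((continuous_Gvec β η F s).comp_continuousOn (hX.mono Icc_subset_Ici_self)).integrableOn_Icc
      ).mono_set Ioc_subset_Icc_self

theorem Gvec_fst_ge {β η c : ℝ} {F : Fin 2 → ℝ} (hβ : 0 ≤ β) (hη : 0 ≤ η) (hF : 0 ≤ F 0)
    {x : ℝ × ℝ} (hx : c ≤ x.2) (s : Fin 4) :
    ![0, η / (1 + exp (-β * c)), 0, η / 2] s - F 0 ≤ (Gvec β η F s x).1 :=
  sub_le_sub (mu_fst_ge hβ hη hx s) (fOut_le hF x.1)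

theorem Gvec_snd_ge {β η c : ℝ} {F : Fin 2 → ℝ} (hβ : 0 ≤ β) (hη : 0 ≤ η) (hF : 0 ≤ F 1)
    {x : ℝ × ℝ} (hx : c ≤ x.1) (s : Fin 4) :
    ![0, 0, η / (1 + exp (-β * c)), η / 2] s - F 1 ≤ (Gvec β η F s x).2 :=
  sub_le_sub (mu_snd_ge hβ hη hx s) (fOut_le hF x.2)

theorem stmt12_general (β η : ℝ) (F : Fin 2 → ℝ) (hβ : 0 < β) (hη : 0 < η)
    (hF : ∀ k, 0 < F k) (xb : Fin 2 → ℝ)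
    (σ : ℝ → Fin 4) (hσ : Measurable σ) (p : Fin 4 → ℝ)
    (hfrac : ∀ s : Fin 4, Filter.Tendsto
      (fun t : ℝ => (volume {τ : ℝ | τ ∈ Set.Icc 0 t ∧ σ τ = s}).toReal / t)
      Filter.atTop (nhds (p s)))
    (X : ℝ → ℝ × ℝ) (hXcont : ContinuousOn X (Set.Ici (0 : ℝ)))
    (hXeq : ∀ t : ℝ, 0 ≤ t → X t = X 0 + ∫ τ in (0 : ℝ)..t, Gvec β η F (σ τ) (X τ))
    (hXM : ∀ t : ℝ, 0 ≤ t → X t ∈ Set.Ici (xb 0) ×ˢ Set.Ici (xb 1))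
    (hX_sub1 : Filter.Tendsto (fun t : ℝ => (X t).1 / t) Filter.atTop (nhds 0))
    (hX_sub2 : Filter.Tendsto (fun t : ℝ => (X t).2 / t) Filter.atTop (nhds 0)) :
    η * (p 1 / (1 + Real.exp (-β * xb 1)) + p 3 / 2) ≤ F 0 ∧
    η * (p 2 / (1 + Real.exp (-β * xb 0)) + p 3 / 2) ≤ F 1 := by
  have hG : ∀ t, 0 ≤ t → IntervalIntegrable (fun τ => Gvec β η F (σ τ) (X τ)) volume 0 t :=
    fun t ht => intervalIntegrable_Gvec_switched hσ hXcont ht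
  have hX₁ : ∀ t, 0 ≤ t → (X t).1 = (X 0).1 + ∫ τ in 0..t, (Gvec β η F (σ τ) (X τ)).1 :=
    fun t ht => by
      rw [hXeq t ht, Prod.fst_add]
      exact congrArg _ ((ContinuousLinearMap.fst ℝ ℝ ℝ).intervalIntegral_comp_comm (hG t ht)).symm
  have hX₂ : ∀ t, 0 ≤ t → (X t).2 = (X 0).2 + ∫ τ in 0..t, (Gvec β η F (σ τ) (X τ)).2 :=
    fun t ht => by
      rw [hXeq t ht, Prod.snd_add]
      exact congrArg _ ((ContinuousLinearMap.snd ℝ ℝ ℝ).intervalIntegral_comp_comm (hG t ht)).symm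
  have h₁ := sum_mul_le_of_sublinear hσ hfrac (fun t ht => ⟨(hG t ht).1.fst, (hG t ht).2.fst⟩) hX₁
    (fun τ hτ => Gvec_fst_ge hβ.le hη.le (hF 0).le (hXM τ hτ).2 (σ τ)) hX_sub1
  have h₂ := sum_mul_le_of_sublinear hσ hfrac (fun t ht => ⟨(hG t ht).1.snd, (hG t ht).2.snd⟩) hX₂
    (fun τ hτ => Gvec_snd_ge hβ.le hη.le (hF 1).le (hXM τ hτ).1 (σ τ)) hX_sub2
  refine ⟨Eq.trans_le ?_ h₁, Eq.trans_le ?_ h₂⟩ <;> simp [Fin.sum_univ_four] <;> ring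

/-- trajectory-wise necessary condition for stability. If the switching signal
has occupation fractions `p_s`, the trajectory stays in `M = [x̄₁,∞) × [x̄₂,∞)` and grows
sublinearly, then `η (p₂/(1+e^{−β x̄₂}) + p₄/2) ≤ F₁` and `η (p₃/(1+e^{−β x̄₁}) + p₄/2) ≤ F₂`.
(Modes 1,2,3,4 are indexed by `Fin 4` as 0,1,2,3.) -/
theorem stmt12 (β η : ℝ) (F : Fin 2 → ℝ) (hβ : 0 < β) (hη : 0 < η)
    (hF : ∀ k, 0 < F k) (xb : Fin 2 → ℝ)
    (hxb_nonneg : ∀ k, 0 ≤ xb k)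
    (hxb_eq : ∀ k, η * Real.exp (-β * xb k) / (1 + Real.exp (-β * xb k)) =
      F k * (1 - Real.exp (-xb k)))
    (hxb_unique : ∀ k y, 0 ≤ y →
      η * Real.exp (-β * y) / (1 + Real.exp (-β * y)) = F k * (1 - Real.exp (-y)) → y = xb k)
    (σ : ℝ → Fin 4) (hσ : Measurable σ) (p : Fin 4 → ℝ)
    (hfrac : ∀ s : Fin 4, Filter.Tendsto
      (fun t : ℝ => (volume {τ : ℝ | τ ∈ Set.Icc 0 t ∧ σ τ = s}).toReal / t)
      Filter.atTop (nhds (p s)))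
    (X : ℝ → ℝ × ℝ) (hXcont : ContinuousOn X (Set.Ici (0 : ℝ)))
    (hXeq : ∀ t : ℝ, 0 ≤ t → X t = X 0 + ∫ τ in (0 : ℝ)..t, Gvec β η F (σ τ) (X τ))
    (hXM : ∀ t : ℝ, 0 ≤ t → X t ∈ Set.Ici (xb 0) ×ˢ Set.Ici (xb 1))
    (hX_sub1 : Filter.Tendsto (fun t : ℝ => (X t).1 / t) Filter.atTop (nhds 0))
    (hX_sub2 : Filter.Tendsto (fun t : ℝ => (X t).2 / t) Filter.atTop (nhds 0)) :
    η * (p 1 / (1 + Real.exp (-β * xb 1)) + p 3 / 2) ≤ F 0 ∧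
    η * (p 2 / (1 + Real.exp (-β * xb 0)) + p 3 / 2) ≤ F 1 :=
  stmt12_general β η F hβ hη hF xb σ hσ p hfrac X hXcont hXeq hXM hX_sub1 hX_sub2
end
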